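/- arXiv:2210.13862 — 5 statements merged into one kernel-verified Lean document; each statement's English description precedes it below -/
import Mathlib

section
/- For non-negative integers n, m and any integer k with 0 ≤ k ≤ n + m, one has binom(n, m) = Σ_{i=0}^{m} binom(n-k+i, m-i) · binom(k-i, i) + Σ_{i=0}^{m-1} binom(n-k+i, m-i-1) · binom(k-i-1, i), where the binomial coefficient binom(a, b) is declared to be 0 whenever a < 0 or b < 0. -/
/-!
Pascal's rule, applied to the left factors of the first sum and then to the right factors of
what results, shows that the right-hand side does not change when `k < n + m` increases by one;
at `k = 0` it reduces to `binom n m`.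
-/

/-- Binomial coefficient extended to integer arguments, declared to be `0`
whenever one of the arguments is negative. -/
def binom (a b : ℤ) : ℤ := if 0 ≤ a ∧ 0 ≤ b then (a.toNat).choose b.toNat else 0

lemma binom_eq_zero_of_neg_left {a : ℤ} (b : ℤ) (ha : a < 0) : binom a b = 0 := by
  simp [binom, ha.not_ge]

lemma binom_eq_zero_of_neg_right (a : ℤ) {b : ℤ} (hb : b < 0) : binom a b = 0 := by
  simp [binom, hb.not_ge]

@[simp, norm_cast]
lemma binom_natCast (a b : ℕ) : binom a b = a.choose b := by
  simp [binom]

/-- The one exception to Pascal's rule is `binom 0 0 = 1 ≠ binom (-1) 0 + binom (-1) (-1)`. -/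
lemma binom_add_one_left (a b : ℤ) (h : a ≠ -1 ∨ b ≠ 0) :
    binom (a + 1) b = binom a b + binom a (b - 1) := by
  rcases lt_or_ge b 0 with hb | hb
  · rw [binom_eq_zero_of_neg_right _ hb, binom_eq_zero_of_neg_right _ hb,
      binom_eq_zero_of_neg_right _ (show b - 1 < 0 by omega), add_zero]
  lift b to ℕ using hb
  rcases lt_or_ge a 0 with ha | ha
  · rw [binom_eq_zero_of_neg_left _ ha, binom_eq_zero_of_neg_left _ ha, add_zero]
    rcases lt_or_eq_of_le (show a + 1 ≤ 0 by omega) with ha' | ha'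
    · exact binom_eq_zero_of_neg_left _ ha'
    · obtain ⟨b, rfl⟩ := Nat.exists_eq_add_one.mpr (by omega : 0 < b)
      rw [ha', ← Nat.cast_zero, binom_natCast, Nat.choose_zero_succ, Nat.cast_zero]
  lift a to ℕ using ha
  rw [← Nat.cast_add_one, binom_natCast, binom_natCast]
  cases b with
  | zero => simp [binom_eq_zero_of_neg_right _ (show (-1 : ℤ) < 0 by norm_num)]
  | succ b =>
    rw [Nat.cast_add_one, add_sub_cancel_right, binom_natCast, Nat.choose_succ_succ']
    push_cast
    ring

/-- Tilings of a row of `n + m` cells by `m` dominoes and `n - m` squares with no domino on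
cells `k, k + 1`, counted by the number `i` of dominoes among the first `k` cells. -/
def cutTilings (n m : ℕ) (k : ℤ) : ℤ :=
  ∑ i ∈ Finset.range (m + 1), binom (n - k + i) (m - i) * binom (k - i) i

/-- The same tilings, but with a domino on cells `k, k + 1`. -/
def dominoTilings (n m : ℕ) (k : ℤ) : ℤ :=
  ∑ i ∈ Finset.range m, binom (n - k + i) (m - i - 1) * binom (k - i - 1) i

lemma cutTilings_zero (n m : ℕ) : cutTilings n m 0 = binom n m := by
  rw [cutTilings, Finset.sum_eq_single 0]
  · simp [binom]
  · intro i _ hi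
    exact mul_eq_zero_of_right _ (binom_eq_zero_of_neg_left _ (by omega))
  · simp

lemma dominoTilings_zero (n m : ℕ) : dominoTilings n m 0 = 0 :=
  Finset.sum_eq_zero fun i _ => mul_eq_zero_of_right _ (binom_eq_zero_of_neg_left _ (by omega))

lemma cutTilings_add_one {k : ℤ} (n m : ℕ) (hk : 0 ≤ k) :
    cutTilings n m (k + 1) =
      ∑ i ∈ Finset.range (m + 1), binom (n - (k + 1) + i) (m - i) * binom (k - i) i +
        dominoTilings n m k := by
  have pascal (i : ℕ) : binom (k + 1 - i) i = binom (k - i) i + binom (k - i) (i - 1) := by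
    rw [show k + 1 - i = k - i + 1 by ring, binom_add_one_left]
    omega
  have shift : ∑ i ∈ Finset.range (m + 1),
      binom (n - (k + 1) + i) (m - i) * binom (k - i) (i - 1) = dominoTilings n m k := by
    rw [Finset.sum_range_succ',
      mul_eq_zero_of_right _ (binom_eq_zero_of_neg_right _ (by norm_num)), add_zero]
    refine Finset.sum_congr rfl fun i _ => ?_
    push_cast
    ring_nf
  simp only [cutTilings, pascal, mul_add, Finset.sum_add_distrib, shift]

lemma dominoTilings_add_one {k : ℤ} (n m : ℕ) :
    dominoTilings n m (k + 1) =
      ∑ i ∈ Finset.range (m + 1), binom (n - (k + 1) + i) (m - i - 1) * binom (k - i) i := by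
  rw [Finset.sum_range_succ, binom_eq_zero_of_neg_right _ (by omega), zero_mul, add_zero,
    dominoTilings]
  refine Finset.sum_congr rfl fun i _ => ?_
  ring_nf

lemma cutTilings_add_dominoTilings_add_one {k : ℤ} (n m : ℕ) (hk : 0 ≤ k) (hkn : k < n + m) :
    cutTilings n m (k + 1) + dominoTilings n m (k + 1) =
      cutTilings n m k + dominoTilings n m k := by
  have pascal : ∀ i ∈ Finset.range (m + 1),
      binom (n - (k + 1) + i) (m - i) + binom (n - (k + 1) + i) (m - i - 1) =
        binom (n - k + i) (m - i) := by
    intro i hi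
    rw [← binom_add_one_left _ _ (by have := Finset.mem_range.mp hi; omega)]
    ring_nf
  rw [cutTilings_add_one n m hk, dominoTilings_add_one, add_right_comm, ← Finset.sum_add_distrib,
    cutTilings]
  congr 1
  refine Finset.sum_congr rfl fun i hi => ?_
  rw [← pascal i hi, add_mul]

lemma cutTilings_add_dominoTilings (n m k : ℕ) (hk : k ≤ n + m) :
    cutTilings n m k + dominoTilings n m k = binom n m := by
  induction k with
  | zero => rw [Nat.cast_zero, cutTilings_zero, dominoTilings_zero, add_zero]
  | succ k ih =>
    rw [Nat.cast_add_one, cutTilings_add_dominoTilings_add_one n m (by positivity) (by omega),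
      ih (by omega)]

/-- For non-negative integers `n, m` and `0 ≤ k ≤ n + m`,
`binom n m = Σ_{i=0}^{m} binom (n-k+i) (m-i) * binom (k-i) i
  + Σ_{i=0}^{m-1} binom (n-k+i) (m-i-1) * binom (k-i-1) i`. -/
theorem binom_identity (n m k : ℕ) (hk : k ≤ n + m) :
    binom n m =
      (∑ i ∈ Finset.range (m + 1),
        binom ((n : ℤ) - k + i) ((m : ℤ) - i) * binom ((k : ℤ) - i) i) +
      ∑ i ∈ Finset.range m,
        binom ((n : ℤ) - k + i) ((m : ℤ) - i - 1) * binom ((k : ℤ) - i - 1) i :=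
  (cutTilings_add_dominoTilings n m k hk).symm
end

section
/- Let q_r(x) and q_r(x,x) be as defined by the generating series Π (1+x_i t)/(1-x_i t) and its square, with q_r = 0 for r < 0. Then for every integer λ₁ ≥ 0, Σ_{k=0}^{λ₁} q_{2k+1}(x) · q_{2(λ₁−k)+1}(x) = (1/2) q_{2λ₁+2}(x,x). -/
/-!
Write `Q(t) = ∑ q_r t^r = N(t) / D(t)` with `D(t) = ∏ (1 - x_i t)` and `N(t) = D(-t)`. Then
`Q(t) Q(-t) = 1` and `∑ qq_r t^r = Q(t)²`. Hence, for `m > 0`, the coefficient of `t^m` in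
`Q(t)² - Q(-t) Q(t)` is `qq_m`, while termwise it is `∑_{i + j = m} (1 - (-1)^i) q_i q_j`, which for
even `m` is twice the sum over the odd-odd decompositions `m = i + j`.
-/

open Finset PowerSeries

theorem Finset.sum_range_two_mul_add_one_one_sub_neg_one_pow_mul {R : Type*} [CommRing R]
    (g : ℕ → R) (n : ℕ) :
    ∑ i ∈ range (2 * n + 1), (1 - (-1) ^ i) * g i = 2 * ∑ k ∈ range n, g (2 * k + 1) := by
  induction n with
  | zero => simp
  | succ n ih =>
    have h : (-1 : R) ^ (2 * n) = 1 := by rw [pow_mul, neg_one_sq, one_pow]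
    rw [show 2 * (n + 1) + 1 = 2 * n + 1 + 1 + 1 by ring, sum_range_succ, sum_range_succ, ih,
      sum_range_succ]
    simp only [pow_succ, h]
    ring

namespace PowerSeries

variable {R : Type*} [CommRing R]

theorem rescale_neg_one_one_sub_C_mul_X (a : R) :
    rescale (-1) (1 - C a * X) = 1 + C a * X := by
  ext (_ | _ | m) <;> simp

theorem rescale_neg_one_prod_one_sub_C_mul_X {ι : Type*} (s : Finset ι) (a : ι → R) :
    rescale (-1) (∏ i ∈ s, (1 - C (a i) * X)) = ∏ i ∈ s, (1 + C (a i) * X) := by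
  simp only [map_prod, rescale_neg_one_one_sub_C_mul_X]

theorem isUnit_prod_one_sub_C_mul_X {ι : Type*} (s : Finset ι) (a : ι → R) :
    IsUnit (∏ i ∈ s, (1 - C (a i) * X)) :=
  isUnit_iff_constantCoeff.mpr (by simp [map_prod])

theorem mul_rescale_neg_one_self_of_mul_eq {f D : R⟦X⟧} (hD : IsUnit D)
    (hf : f * D = rescale (-1) D) : f * rescale (-1) f = 1 := by
  have hD' : IsUnit (rescale (-1) D) := hD.map _
  have hf' : rescale (-1) f * rescale (-1) D = D := by
    rw [← map_mul, hf, rescale_rescale, neg_one_mul, neg_neg, rescale_one, RingHom.id_apply]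
  refine (hD.mul hD').mul_left_cancel ?_
  calc D * rescale (-1) D * (f * rescale (-1) f)
      = (f * D) * (rescale (-1) f * rescale (-1) D) := by ring
    _ = D * rescale (-1) D * 1 := by rw [hf, hf']; ring

theorem coeff_mul_sub_rescale_neg_one_mul (f g : R⟦X⟧) (m : ℕ) :
    coeff m (f * g - rescale (-1) f * g) =
      ∑ i ∈ range (m + 1), (1 - (-1) ^ i) * (coeff i f * coeff (m - i) g) := by
  simp only [map_sub, coeff_mul, Nat.sum_antidiagonal_eq_sum_range_succ_mk, coeff_rescale,
    ← sum_sub_distrib]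
  exact sum_congr rfl fun _ _ => by ring

theorem coeff_sq_two_mul_of_mul_rescale_neg_one_self {f : R⟦X⟧}
    (hf : f * rescale (-1) f = 1) {n : ℕ} (hn : n ≠ 0) :
    coeff (2 * n) (f ^ 2) =
      2 * ∑ k ∈ range n, coeff (2 * k + 1) f * coeff (2 * n - (2 * k + 1)) f := by
  have hsq : f ^ 2 = f * f - rescale (-1) f * f + 1 := by rw [mul_comm (rescale (-1) f), hf]; ring
  rw [hsq, map_add, coeff_one, if_neg (by omega), add_zero,
    coeff_mul_sub_rescale_neg_one_mul, sum_range_two_mul_add_one_one_sub_neg_one_pow_mul]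

end PowerSeries

theorem mny_n_one_even_general (n : ℕ)
    (q qq : ℕ → MvPolynomial (Fin n) ℚ)
    (hq : (PowerSeries.mk fun r => q r) *
        ∏ i : Fin n, (1 - PowerSeries.C (MvPolynomial.X i) *
          PowerSeries.X)
      = ∏ i : Fin n, (1 + PowerSeries.C (MvPolynomial.X i) *
          PowerSeries.X))
    (hqq : (PowerSeries.mk fun r => qq r) *
        (∏ i : Fin n, (1 - PowerSeries.C (MvPolynomial.X i) *
          PowerSeries.X)) ^ 2
      = (∏ i : Fin n, (1 + PowerSeries.C (MvPolynomial.X i) *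
          PowerSeries.X)) ^ 2)
    (l : ℕ) :
    ∑ k ∈ Finset.range (l + 1), q (2 * k + 1) * q (2 * (l - k) + 1)
      = MvPolynomial.C ((1 : ℚ) / 2) * qq (2 * l + 2) := by
  have hD := isUnit_prod_one_sub_C_mul_X univ (MvPolynomial.X (R := ℚ) (σ := Fin n))
  have hinv := mul_rescale_neg_one_self_of_mul_eq hD
    (hq.trans (rescale_neg_one_prod_one_sub_C_mul_X _ _).symm)
  have hsq : mk qq = (mk q) ^ 2 := (hD.pow 2).mul_right_cancel (by rw [hqq, ← hq, mul_pow])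
  have hcoeff := congrArg (coeff (2 * (l + 1))) hsq
  rw [coeff_mk, coeff_sq_two_mul_of_mul_rescale_neg_one_self hinv l.succ_ne_zero] at hcoeff
  have hhalf : MvPolynomial.C ((1 : ℚ) / 2) * 2 = (1 : MvPolynomial (Fin n) ℚ) := by
    rw [← map_ofNat MvPolynomial.C 2, ← map_mul]; norm_num
  rw [show 2 * l + 2 = 2 * (l + 1) by ring, hcoeff, ← mul_assoc, hhalf, one_mul]
  refine sum_congr rfl fun k hk => ?_
  rw [coeff_mk, coeff_mk, show 2 * (l + 1) - (2 * k + 1) = 2 * (l - k) + 1 by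
    rw [mem_range] at hk; omega]

/-- The `n = 1` case (even version) of the Mizukawa–Nakajima–Yamada conjecture:
`∑_{k=0}^{λ₁} q_{2k+1}(x) q_{2(λ₁-k)+1}(x) = (1/2) q_{2λ₁+2}(x,x)`. -/
theorem mny_n_one_even (n : ℕ) (hn : 1 ≤ n)
    (q qq : ℕ → MvPolynomial (Fin n) ℚ)
    (hq : (PowerSeries.mk fun r => q r) *
        ∏ i : Fin n, (1 - PowerSeries.C (MvPolynomial.X i) *
          PowerSeries.X)
      = ∏ i : Fin n, (1 + PowerSeries.C (MvPolynomial.X i) *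
          PowerSeries.X))
    (hqq : (PowerSeries.mk fun r => qq r) *
        (∏ i : Fin n, (1 - PowerSeries.C (MvPolynomial.X i) *
          PowerSeries.X)) ^ 2
      = (∏ i : Fin n, (1 + PowerSeries.C (MvPolynomial.X i) *
          PowerSeries.X)) ^ 2)
    (l : ℕ) :
    ∑ k ∈ Finset.range (l + 1), q (2 * k + 1) * q (2 * (l - k) + 1)
      = MvPolynomial.C ((1 : ℚ) / 2) * qq (2 * l + 2) :=
  mny_n_one_even_general n q qq hq hqq l
end

section
/- Let q_r(x) and q_r(x,x) be as defined by the generating series Π (1+x_i t)/(1-x_i t) and its square. Then for every integer λ₁ ≥ 0, Σ_{k=0}^{λ₁} q_{2k}(x) · q_{2(λ₁−k)+1}(x) = (1/2) q_{2λ₁+1}(x,x). -/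
/-! Clearing the invertible denominator `∏ (1 - xᵢ t)²` shows that the generating series of
`q_r(x,x)` is the square of that of `q_r(x)`; in an odd coefficient of a square every product
`q_{2k} q_{2(λ₁-k)+1}` occurs twice. -/

open Finset

theorem Finset.sum_range_two_mul {M : Type*} [AddCommMonoid M] (m : ℕ) (f : ℕ → M) :
    ∑ j ∈ range (2 * m), f j = ∑ k ∈ range m, (f (2 * k) + f (2 * k + 1)) := by
  induction m with
  | zero => simp
  | succ m ih =>
    rw [show 2 * (m + 1) = 2 * m + 1 + 1 by ring, sum_range_succ, sum_range_succ,
      sum_range_succ, ih, add_assoc]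

-- The terms with odd first index are the reflections of those with even first index.
theorem Finset.sum_range_mul_sub_odd {R : Type*} [CommSemiring R] (f : ℕ → R) (l : ℕ) :
    ∑ j ∈ range (2 * l + 2), f j * f (2 * l + 1 - j)
      = 2 * ∑ k ∈ range (l + 1), f (2 * k) * f (2 * (l - k) + 1) := by
  have hodd : ∑ k ∈ range (l + 1), f (2 * k + 1) * f (2 * l + 1 - (2 * k + 1))
      = ∑ k ∈ range (l + 1), f (2 * k) * f (2 * (l - k) + 1) := by
    rw [← sum_range_reflect]
    refine sum_congr rfl fun k hk => ?_
    have hkl : k ≤ l := Nat.lt_succ_iff.mp (mem_range.mp hk)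
    rw [mul_comm]
    congr 2
    omega
  have heven : ∑ k ∈ range (l + 1), f (2 * k) * f (2 * l + 1 - 2 * k)
      = ∑ k ∈ range (l + 1), f (2 * k) * f (2 * (l - k) + 1) := by
    refine sum_congr rfl fun k hk => ?_
    have hkl : k ≤ l := Nat.lt_succ_iff.mp (mem_range.mp hk)
    congr 2
    omega
  rw [show 2 * l + 2 = 2 * (l + 1) by ring, sum_range_two_mul, sum_add_distrib, heven, hodd,
    two_mul]

theorem PowerSeries.coeff_odd_sq {R : Type*} [CommSemiring R] (φ : PowerSeries R) (l : ℕ) :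
    coeff (2 * l + 1) (φ ^ 2)
      = 2 * ∑ k ∈ range (l + 1), coeff (2 * k) φ * coeff (2 * (l - k) + 1) φ := by
  rw [sq, coeff_mul, Nat.sum_antidiagonal_eq_sum_range_succ_mk]
  exact sum_range_mul_sub_odd (fun j => coeff j φ) l

theorem PowerSeries.isUnit_prod_one_sub_C_mul_X_s7 {R ι : Type*} [CommRing R] (s : Finset ι)
    (a : ι → R) : IsUnit (∏ i ∈ s, (1 - C (a i) * X)) :=
  isUnit_iff_constantCoeff.mpr (by simp [map_prod])

theorem mny_n_one_odd_general (n : ℕ)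
    (q qq : ℕ → MvPolynomial (Fin n) ℚ)
    (hq : (PowerSeries.mk fun r => q r) *
        ∏ i : Fin n, (1 - PowerSeries.C (R := MvPolynomial (Fin n) ℚ) (MvPolynomial.X i) *
          PowerSeries.X)
      = ∏ i : Fin n, (1 + PowerSeries.C (R := MvPolynomial (Fin n) ℚ) (MvPolynomial.X i) *
          PowerSeries.X))
    (hqq : (PowerSeries.mk fun r => qq r) *
        (∏ i : Fin n, (1 - PowerSeries.C (R := MvPolynomial (Fin n) ℚ) (MvPolynomial.X i) *
          PowerSeries.X)) ^ 2
      = (∏ i : Fin n, (1 + PowerSeries.C (R := MvPolynomial (Fin n) ℚ) (MvPolynomial.X i) *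
          PowerSeries.X)) ^ 2)
    (l : ℕ) :
    ∑ k ∈ Finset.range (l + 1), q (2 * k) * q (2 * (l - k) + 1)
      = MvPolynomial.C ((1 : ℚ) / 2) * qq (2 * l + 1) := by
  have hunit := PowerSeries.isUnit_prod_one_sub_C_mul_X_s7 univ
    (MvPolynomial.X : Fin n → MvPolynomial (Fin n) ℚ)
  have hsq : PowerSeries.mk qq = PowerSeries.mk q ^ 2 :=
    (hunit.pow 2).mul_left_injective (by beta_reduce; rw [hqq, ← hq, mul_pow])
  have hcoeff := PowerSeries.coeff_odd_sq (PowerSeries.mk q) l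
  simp only [← hsq, PowerSeries.coeff_mk] at hcoeff
  rw [hcoeff, ← mul_assoc, ← map_ofNat MvPolynomial.C 2, ← map_mul]
  norm_num

/-- The `n = 1` case (odd version) of the Mizukawa–Nakajima–Yamada conjecture:
`∑_{k=0}^{λ₁} q_{2k}(x) q_{2(λ₁-k)+1}(x) = (1/2) q_{2λ₁+1}(x,x)`. -/
theorem mny_n_one_odd (n : ℕ) (hn : 1 ≤ n)
    (q qq : ℕ → MvPolynomial (Fin n) ℚ)
    (hq : (PowerSeries.mk fun r => q r) *
        ∏ i : Fin n, (1 - PowerSeries.C (R := MvPolynomial (Fin n) ℚ) (MvPolynomial.X i) *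
          PowerSeries.X)
      = ∏ i : Fin n, (1 + PowerSeries.C (R := MvPolynomial (Fin n) ℚ) (MvPolynomial.X i) *
          PowerSeries.X))
    (hqq : (PowerSeries.mk fun r => qq r) *
        (∏ i : Fin n, (1 - PowerSeries.C (R := MvPolynomial (Fin n) ℚ) (MvPolynomial.X i) *
          PowerSeries.X)) ^ 2
      = (∏ i : Fin n, (1 + PowerSeries.C (R := MvPolynomial (Fin n) ℚ) (MvPolynomial.X i) *
          PowerSeries.X)) ^ 2)
    (l : ℕ) :
    ∑ k ∈ Finset.range (l + 1), q (2 * k) * q (2 * (l - k) + 1)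
      = MvPolynomial.C ((1 : ℚ) / 2) * qq (2 * l + 1) :=
  mny_n_one_odd_general n q qq hq hqq l
end

section
/- Define q_r(x) by Σ_{r≥0} q_r(x) t^r = Π_{i=1}^n (1+x_i t)/(1-x_i t) with q_r = 0 for r < 0, and q_r(x,x) by the square of that series. For every integer λ₁ ≥ 0: Σ_{k=0}^{λ₁} q_{2k+1}(x) · (q_{2(λ₁−k)+2}(x) q_1(x) − q_{2(λ₁−k)+3}(x)) = (1/4) (q_{2λ₁+3}(x,x) q_1(x,x) − 2 q_{2λ₁+4}(x,x)). -/
/-! Let `Q = ∑ q_r t^r = F(t) / F(-t)` with `F = ∏ (1 + x_i t)`. Then `Q(t) Q(-t) = 1`, so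
`Q² = 1 + (Q(t) - Q(-t)) Q`, and since `qq` has generating function `Q²`, for `r ≥ 1`
`qq_r = 2 ∑_{j odd} q_j q_{r-j}`. For `r = 1, 2λ₁+3, 2λ₁+4` this gives `qq_1 = 2 q_1`,
`qq_{2λ₁+3} = 2 (A + q_{2λ₁+3})` and `qq_{2λ₁+4} = 2 (B + q_{2λ₁+3} q_1)`, where `A`, `B` are the
odd convolutions over `j < 2λ₁+3`; both sides of the identity then equal `A q_1 - B`. -/

open Finset PowerSeries

variable {R : Type*} [CommRing R]

theorem sum_range_two_mul_one_sub_neg_one_pow_mul (f : ℕ → R) (m : ℕ) :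
    ∑ i ∈ range (2 * m), (1 - (-1) ^ i) * f i = 2 * ∑ k ∈ range m, f (2 * k + 1) := by
  induction m with
  | zero => simp
  | succ m ih =>
    rw [mul_add_one, sum_range_succ, sum_range_succ, ih, sum_range_succ, pow_succ, pow_mul]
    simp only [neg_one_sq, one_pow]
    ring

namespace PowerSeries

theorem rescale_neg_one_involutive (f : R⟦X⟧) : rescale (-1) (rescale (-1) f) = f := by
  rw [rescale_rescale]; simp

theorem mul_rescale_neg_one_eq_one {Q G : R⟦X⟧} (hG : IsUnit G) (hQ : Q * G = rescale (-1) G) :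
    Q * rescale (-1) Q = 1 := by
  have hQ' : rescale (-1) Q * rescale (-1) G = G := by
    rw [← map_mul, hQ, rescale_neg_one_involutive]
  refine (hG.mul (hG.map (rescale (-1)))).mul_left_cancel ?_
  linear_combination (rescale (-1) Q * rescale (-1) G) * hQ + rescale (-1) G * hQ'

variable {Q : R⟦X⟧}

theorem coeff_sq_of_mul_rescale_neg_one_eq_one (hQ : Q * rescale (-1) Q = 1) {r : ℕ}
    (hr : r ≠ 0) :
    coeff r (Q ^ 2)
      = 2 * ∑ k ∈ range ((r + 1) / 2), coeff (2 * k + 1) Q * coeff (r - (2 * k + 1)) Q := by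
  have hsq : Q ^ 2 = 1 + (Q - rescale (-1) Q) * Q := by linear_combination hQ
  have hcoeff : coeff r (Q ^ 2)
      = ∑ i ∈ range (r + 1), (1 - (-1) ^ i) * (coeff i Q * coeff (r - i) Q) := by
    rw [hsq, map_add, coeff_one, if_neg hr, zero_add, coeff_mul,
      Nat.sum_antidiagonal_eq_sum_range_succ fun i j => coeff i (Q - rescale (-1) Q) * coeff j Q]
    refine sum_congr rfl fun i _ => ?_
    simp only [map_sub, coeff_rescale]
    ring
  rw [hcoeff]
  obtain ⟨m, rfl | rfl⟩ := Nat.even_or_odd' r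
  · rw [sum_range_succ, pow_mul, neg_one_sq, one_pow, sub_self, zero_mul, add_zero,
      sum_range_two_mul_one_sub_neg_one_pow_mul, show (2 * m + 1) / 2 = m by omega]
  · rw [show 2 * m + 1 + 1 = 2 * (m + 1) by ring, sum_range_two_mul_one_sub_neg_one_pow_mul,
      Nat.mul_div_cancel_left _ two_pos]

theorem four_mul_sum_eq_of_mul_rescale_neg_one_eq_one (hQ0 : constantCoeff Q = 1)
    (hQ : Q * rescale (-1) Q = 1) (l : ℕ) :
    4 * ∑ k ∈ range (l + 1), coeff (2 * k + 1) Q *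
        (coeff (2 * (l - k) + 2) Q * coeff 1 Q - coeff (2 * (l - k) + 3) Q)
      = coeff (2 * l + 3) (Q ^ 2) * coeff 1 (Q ^ 2) - 2 * coeff (2 * l + 4) (Q ^ 2) := by
  set A := ∑ k ∈ range (l + 1), coeff (2 * k + 1) Q * coeff (2 * l + 3 - (2 * k + 1)) Q
  set B := ∑ k ∈ range (l + 1), coeff (2 * k + 1) Q * coeff (2 * l + 4 - (2 * k + 1)) Q
  have hlhs : ∑ k ∈ range (l + 1), coeff (2 * k + 1) Q *
        (coeff (2 * (l - k) + 2) Q * coeff 1 Q - coeff (2 * (l - k) + 3) Q)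
      = A * coeff 1 Q - B := by
    rw [sum_mul, ← sum_sub_distrib]
    refine sum_congr rfl fun k hk => ?_
    rw [mem_range] at hk
    rw [show 2 * l + 3 - (2 * k + 1) = 2 * (l - k) + 2 by omega,
      show 2 * l + 4 - (2 * k + 1) = 2 * (l - k) + 3 by omega]
    ring
  have h1 : coeff 1 (Q ^ 2) = 2 * coeff 1 Q := by
    rw [coeff_sq_of_mul_rescale_neg_one_eq_one hQ one_ne_zero, show (1 + 1) / 2 = 1 from rfl,
      sum_range_one]
    simp [hQ0]
  have h3 : coeff (2 * l + 3) (Q ^ 2) = 2 * (A + coeff (2 * l + 3) Q) := by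
    rw [coeff_sq_of_mul_rescale_neg_one_eq_one hQ (by omega),
      show (2 * l + 3 + 1) / 2 = l + 1 + 1 by omega, sum_range_succ _ (l + 1),
      show 2 * l + 3 - (2 * (l + 1) + 1) = 0 by omega, coeff_zero_eq_constantCoeff_apply, hQ0,
      mul_one, show 2 * (l + 1) + 1 = 2 * l + 3 by ring]
  have h4 : coeff (2 * l + 4) (Q ^ 2) = 2 * (B + coeff (2 * l + 3) Q * coeff 1 Q) := by
    rw [coeff_sq_of_mul_rescale_neg_one_eq_one hQ (by omega),
      show (2 * l + 4 + 1) / 2 = l + 1 + 1 by omega, sum_range_succ _ (l + 1),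
      show 2 * l + 4 - (2 * (l + 1) + 1) = 1 by omega,
      show 2 * (l + 1) + 1 = 2 * l + 3 by ring]
  rw [hlhs, h1, h3, h4]
  ring

end PowerSeries

theorem mny_n_two_len_one_odd_general (n : ℕ)
    (q qq : ℕ → MvPolynomial (Fin n) ℚ)
    (hq : (PowerSeries.mk fun r => q r) *
        ∏ i : Fin n, (1 - PowerSeries.C (R := MvPolynomial (Fin n) ℚ) (MvPolynomial.X i) *
          PowerSeries.X)
      = ∏ i : Fin n, (1 + PowerSeries.C (R := MvPolynomial (Fin n) ℚ) (MvPolynomial.X i) *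
          PowerSeries.X))
    (hqq : (PowerSeries.mk fun r => qq r) *
        (∏ i : Fin n, (1 - PowerSeries.C (R := MvPolynomial (Fin n) ℚ) (MvPolynomial.X i) *
          PowerSeries.X)) ^ 2
      = (∏ i : Fin n, (1 + PowerSeries.C (R := MvPolynomial (Fin n) ℚ) (MvPolynomial.X i) *
          PowerSeries.X)) ^ 2)
    (l : ℕ) :
    ∑ k ∈ Finset.range (l + 1),
        q (2 * k + 1) * (q (2 * (l - k) + 2) * q 1 - q (2 * (l - k) + 3))
      = MvPolynomial.C ((1 : ℚ) / 4) * (qq (2 * l + 3) * qq 1 - 2 * qq (2 * l + 4)) := by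
  set G := ∏ i : Fin n, (1 - PowerSeries.C (R := MvPolynomial (Fin n) ℚ) (MvPolynomial.X i) *
    PowerSeries.X)
  have hG : IsUnit G := isUnit_prod_one_sub_C_mul_X _ _
  have hQ := mul_rescale_neg_one_eq_one hG <| by
    rw [hq]; simp only [G, map_prod, rescale_neg_one_one_sub_C_mul_X]
  have hQ0 : constantCoeff (PowerSeries.mk fun r => q r) = 1 := by
    simpa [G, map_prod] using congrArg constantCoeff hq
  have hQQ : PowerSeries.mk (fun r => qq r) = PowerSeries.mk (fun r => q r) ^ 2 :=
    (hG.pow 2).mul_left_cancel (by rw [mul_comm, hqq, ← hq]; ring)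
  have h4 := four_mul_sum_eq_of_mul_rescale_neg_one_eq_one hQ0 hQ l
  simp only [← hQQ, coeff_mk] at h4
  rw [← h4, ← mul_assoc, ← map_ofNat MvPolynomial.C 4, ← map_mul]
  norm_num

/-- The `n = 2`, `ℓ(λ) ≤ 1` case (odd version) of the Mizukawa–Nakajima–Yamada
conjecture. -/
theorem mny_n_two_len_one_odd (n : ℕ) (hn : 1 ≤ n)
    (q qq : ℕ → MvPolynomial (Fin n) ℚ)
    (hq : (PowerSeries.mk fun r => q r) *
        ∏ i : Fin n, (1 - PowerSeries.C (R := MvPolynomial (Fin n) ℚ) (MvPolynomial.X i) *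
          PowerSeries.X)
      = ∏ i : Fin n, (1 + PowerSeries.C (R := MvPolynomial (Fin n) ℚ) (MvPolynomial.X i) *
          PowerSeries.X))
    (hqq : (PowerSeries.mk fun r => qq r) *
        (∏ i : Fin n, (1 - PowerSeries.C (R := MvPolynomial (Fin n) ℚ) (MvPolynomial.X i) *
          PowerSeries.X)) ^ 2
      = (∏ i : Fin n, (1 + PowerSeries.C (R := MvPolynomial (Fin n) ℚ) (MvPolynomial.X i) *
          PowerSeries.X)) ^ 2)
    (l : ℕ) :
    ∑ k ∈ Finset.range (l + 1),
        q (2 * k + 1) * (q (2 * (l - k) + 2) * q 1 - q (2 * (l - k) + 3))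
      = MvPolynomial.C ((1 : ℚ) / 4) * (qq (2 * l + 3) * qq 1 - 2 * qq (2 * l + 4)) :=
  mny_n_two_len_one_odd_general n q qq hq hqq l
end

section
/- Let x = (x₁,…,x_n) and y = (y₁,…,y_n) be two independent sets of n variables, s_λ(y) the Schur polynomial and S_λ(x) the 2-reduced Schur polynomial defined by S_λ(x) = det(q_{λ_i − i + j}(x))_{1≤i,j≤n}. Then Σ_{λ ∈ P^{(n)}} s_λ(y) S_λ(x) = Π_{i=1}^n Π_{j=1}^n (1 + x_i y_j)/(1 − x_i y_j), where P^{(n)} is the set of partitions of length at most n. -/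
open Finset

/-- The antisymmetrization `a_α(y) = ∑_{σ ∈ S_k} sgn(σ) ∏ᵢ y_{σ(i)}^{αᵢ}`. -/
noncomputable def aalt (k : ℕ) (α : Fin k → ℕ) : MvPolynomial (Fin k) ℚ :=
  ∑ σ : Equiv.Perm (Fin k), ((Equiv.Perm.sign σ : ℤ) : MvPolynomial (Fin k) ℚ) *
    ∏ i, MvPolynomial.X (σ i) ^ α i

/-- The staircase `δ = (k-1, k-2, …, 1, 0)`. -/
def dlt (k : ℕ) : Fin k → ℕ := fun i => k - 1 - i

/-- The `2`-reduced Schur polynomial `S_λ(x) = det (q_{λᵢ - i + j})_{1 ≤ i,j ≤ n}`. -/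
noncomputable def Sred (n : ℕ) (q : ℤ → MvPolynomial (Fin n) ℚ) (f : Fin n → ℕ) :
    MvPolynomial (Fin n) ℚ :=
  Matrix.det (Matrix.of fun i j : Fin n => q (((f i : ℤ) + (j : ℕ)) - (i : ℕ)))

/-- The partitions of `d` of length at most `n`, encoded as antitone functions
`Fin n → ℕ` of total sum `d`. -/
def PLen (n d : ℕ) : Finset (Fin n → ℕ) :=
  (Fintype.piFinset fun _ => Finset.range (d + 1)).filter
    fun f => (∀ i j : Fin n, i ≤ j → f j ≤ f i) ∧ ∑ i, f i = d

/-!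
Multiply both sides by the Vandermonde alternant `a_δ(y)`, which is not a zero divisor.
With `Q(t) = ∑ q_r t^r = ∏ᵢ (1 + xᵢ t)/(1 - xᵢ t)`, the right-hand side is `∏ⱼ Q(yⱼ t)`, and
antisymmetrizing monomials shows that the coefficient of `t^d` in `a_δ(y) ∏ⱼ Q(yⱼ t)` is
`∑_β (∏ⱼ q_{βⱼ}) a_{β+δ}(y)`, summed over compositions `β` of `d`. Only the `m = β + δ` with
distinct parts contribute; writing such an `m` as `(λ + δ) ∘ τ` with `λ` a partition and `τ` a
permutation, the signs of `τ` assemble `∑_λ a_{λ+δ}(y) det (q_{λᵢ-i+j}(x))`, which is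
`a_δ(y) ∑_λ s_λ(y) S_λ(x)`.
-/

open Equiv

section Alternant

variable {R : Type*} [CommRing R] {n : ℕ}

def alternant (y : Fin n → R) (α : Fin n → ℕ) : R :=
  (Matrix.of fun k i => y k ^ α i).det

lemma alternant_eq_sum (y : Fin n → R) (α : Fin n → ℕ) :
    alternant y α = ∑ σ : Perm (Fin n), (Perm.sign σ : R) * ∏ i, y (σ i) ^ α i := by
  simp [alternant, Matrix.det_apply, Units.smul_def]

lemma alternant_eq_zero_of_not_injective (y : Fin n → R) {α : Fin n → ℕ}
    (hα : ¬ Function.Injective α) : alternant y α = 0 := by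
  simp only [Function.Injective, not_forall] at hα
  obtain ⟨i, j, hij, hne⟩ := hα
  exact Matrix.det_zero_of_column_eq hne fun k => by simp [hij]

lemma alternant_comp_perm (y : Fin n → R) (α : Fin n → ℕ) (τ : Perm (Fin n)) :
    alternant y (α ∘ τ) = Perm.sign τ * alternant y α :=
  Matrix.det_permute' τ (Matrix.of fun k i => y k ^ α i)

lemma alternant_dlt (y : Fin n → R) :
    alternant y (dlt n)
      = Perm.sign (Fin.revPerm : Perm (Fin n)) * (Matrix.vandermonde y).det := by
  rw [alternant, ← Matrix.det_permute']
  congr 1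
  ext k i
  simp only [Matrix.of_apply, Matrix.submatrix_apply, Matrix.vandermonde_apply, id,
    Fin.revPerm_apply, Fin.val_rev, dlt]
  congr 1
  omega

lemma alternant_dlt_ne_zero [IsDomain R] {y : Fin n → R} (hy : Function.Injective y) :
    alternant y (dlt n) ≠ 0 := by
  rw [alternant_dlt]
  refine mul_ne_zero ?_ (Matrix.det_vandermonde_ne_zero_iff.mpr hy)
  rcases Int.units_eq_one_or (Perm.sign (Fin.revPerm : Perm (Fin n))) with h | h <;> simp [h]

def jacobiTrudi (c : ℤ → R) (f : Fin n → ℕ) : R :=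
  (Matrix.of fun i j : Fin n => c (((f i : ℤ) + (j : ℕ)) - (i : ℕ))).det

end Alternant

section Staircase

variable {n : ℕ}

lemma StrictAnti.sub_le_sub {u : Fin n → ℕ} (hu : StrictAnti u) {i j : Fin n}
    (hij : i ≤ j) : (j : ℕ) - i ≤ u i - u j := by
  have := card_le_card_of_injOn u (s := Icc i j) (t := Icc (u j) (u i))
    (fun k hk => by
      rw [coe_Icc, Set.mem_Icc] at hk
      simp only [coe_Icc, Set.mem_Icc]
      exact ⟨hu.antitone hk.2, hu.antitone hk.1⟩)
    hu.injective.injOn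
  rw [Fin.card_Icc, Nat.card_Icc] at this
  omega

lemma dlt_strictAnti : StrictAnti (dlt n) := fun i j hij => by
  have := j.isLt
  simp only [dlt, Fin.lt_def] at *
  omega

lemma dlt_sub_dlt (i j : Fin n) : (dlt n i : ℤ) - dlt n j = (j : ℕ) - (i : ℕ) := by
  have := i.isLt; have := j.isLt
  simp only [dlt]
  omega

lemma StrictAnti.dlt_le {u : Fin n → ℕ} (hu : StrictAnti u) : dlt n ≤ u := fun i => by
  have hi := i.isLt
  have := hu.sub_le_sub (i := i) (j := ⟨n - 1, by omega⟩) (Fin.le_def.mpr (by dsimp only; omega))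
  simp only [dlt] at *
  omega

lemma StrictAnti.antitone_sub_dlt {u : Fin n → ℕ} (hu : StrictAnti u) :
    Antitone fun i => u i - dlt n i :=
  fun i j hij => by
    have := hu.sub_le_sub hij
    have := hu.antitone hij
    have := hu.dlt_le j
    have := dlt_sub_dlt i j
    dsimp only
    omega

lemma perm_eq_one_of_strictAnti {α : Type*} [LinearOrder α] {u v : Fin n → α}
    (hu : StrictAnti u) (hv : StrictAnti v) {ρ : Perm (Fin n)} (h : u = v ∘ ρ) : ρ = 1 := by
  have hρ : StrictMono ρ := fun a b hab => hv.lt_iff_gt.mp (by simpa [h] using hu hab)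
  have : ⇑ρ = id := (hρ.range_inj strictMono_id).mp (by simp [ρ.surjective.range_eq])
  exact Equiv.ext (congrFun this)

lemma exists_perm_strictAnti_comp {α : Type*} [LinearOrder α] {m : Fin n → α}
    (hm : Function.Injective m) : ∃ τ : Perm (Fin n), StrictAnti (m ∘ τ) :=
  ⟨Fin.revPerm.trans (Tuple.sort m),
    ((Tuple.monotone_sort m).strictMono_of_injective (hm.comp (Equiv.injective _))).comp_strictAnti
      fun _ _ => Fin.rev_lt_rev.mpr⟩

end Staircase

section Reindexing

variable {n : ℕ}

lemma mem_PLen {d : ℕ} {f : Fin n → ℕ} : f ∈ PLen n d ↔ Antitone f ∧ ∑ i, f i = d := by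
  refine mem_filter.trans (and_iff_right_of_imp fun h => ?_)
  exact Fintype.mem_piFinset.mpr fun i => mem_range.mpr <| Nat.lt_succ_of_le <|
    h.2 ▸ single_le_sum (fun _ _ => Nat.zero_le _) (mem_univ i)

lemma sum_piAntidiag_comp_perm {M : Type*} [AddCommMonoid M] (σ : Perm (Fin n)) (d : ℕ)
    (G : (Fin n → ℕ) → M) :
    ∑ γ ∈ piAntidiag univ d, G (γ ∘ σ) = ∑ β ∈ piAntidiag univ d, G β :=
  sum_nbij' (· ∘ σ) (· ∘ σ.symm) (by simp [Equiv.sum_comp σ]) (by simp [Equiv.sum_comp σ.symm])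
    (fun _ _ => by ext; simp) (fun _ _ => by ext; simp) fun _ _ => rfl

lemma sum_PLen_add_dlt {M : Type*} [AddCommMonoid M] (d : ℕ) (G : (Fin n → ℕ) → M) :
    ∑ f ∈ PLen n d, G (f + dlt n)
      = ∑ u ∈ (piAntidiag univ (d + ∑ i, dlt n i)).filter StrictAnti, G u := by
  refine sum_nbij' (· + dlt n) (fun u i => u i - dlt n i) (fun f hf => ?_) (fun u hu => ?_)
    (fun f _ => by simp) (fun u hu => ?_) fun _ _ => rfl
  · obtain ⟨hanti, hsum⟩ := mem_PLen.mp hf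
    refine mem_filter.mpr ⟨?_, hanti.add_strictAnti dlt_strictAnti⟩
    simp [sum_add_distrib, hsum]
  · simp only [mem_filter, mem_piAntidiag, mem_univ, implies_true, and_true] at hu
    refine mem_PLen.mpr ⟨hu.2.antitone_sub_dlt, ?_⟩
    have : ∑ i, (u i - dlt n i) + ∑ i, dlt n i = ∑ i, u i := by
      rw [← sum_add_distrib]
      exact sum_congr rfl fun i _ => tsub_add_cancel_of_le (hu.2.dlt_le i)
    exact add_right_cancel (this.trans hu.1)
  · simp only [mem_filter] at hu
    exact funext fun i => tsub_add_cancel_of_le (hu.2.dlt_le i)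

lemma sum_piAntidiag_injective {M : Type*} [AddCommMonoid M] (N : ℕ) (G : (Fin n → ℕ) → M) :
    ∑ m ∈ (piAntidiag univ N).filter Function.Injective, G m
      = ∑ u ∈ (piAntidiag univ N).filter StrictAnti, ∑ τ : Perm (Fin n), G (u ∘ τ) := by
  rw [← sum_product']
  refine (sum_bij (fun p _ => p.1 ∘ p.2) (fun p hp => ?_) (fun p hp p' hp' h => ?_)
    (fun m hm => ?_) fun _ _ => rfl).symm
  · simp only [mem_product, mem_filter, mem_piAntidiag, mem_univ, implies_true, and_true] at hp ⊢
    exact ⟨(Equiv.sum_comp p.2 p.1).trans hp.1, hp.2.injective.comp p.2.injective⟩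
  · obtain ⟨u, τ⟩ := p
    obtain ⟨v, π⟩ := p'
    simp only [mem_product, mem_filter, mem_univ, and_true] at hp hp'
    have hρ : τ.symm.trans π = 1 :=
      perm_eq_one_of_strictAnti hp.2 hp'.2 (by ext i; simpa using congrFun h (τ.symm i))
    obtain rfl : π = τ := mul_inv_eq_one.mp hρ
    exact Prod.ext (by ext i; simpa using congrFun h (π.symm i)) rfl
  · simp only [mem_filter, mem_piAntidiag, mem_univ, implies_true, and_true] at hm
    obtain ⟨τ, hτ⟩ := exists_perm_strictAnti_comp hm.2
    refine ⟨(m ∘ τ, τ.symm), ?_, by ext; simp⟩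
    simp only [mem_product, mem_filter, mem_piAntidiag, mem_univ, implies_true, and_true]
    exact ⟨(Equiv.sum_comp τ m).trans hm.1, hτ⟩

end Reindexing

section Cauchy

variable {R : Type*} [CommRing R] {n : ℕ}

lemma alternant_mul_sum_piAntidiag (y : Fin n → R) (α : Fin n → ℕ) (c : ℕ → R) (d : ℕ) :
    alternant y α * ∑ γ ∈ piAntidiag univ d, ∏ j, y j ^ γ j * c (γ j)
      = ∑ β ∈ piAntidiag univ d, (∏ j, c (β j)) * alternant y (β + α) := by
  have hterm : ∀ (σ : Perm (Fin n)) (γ : Fin n → ℕ),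
      (∏ i, y (σ i) ^ α i) * ∏ j, y j ^ γ j * c (γ j)
        = (∏ j, c (γ (σ j))) * ∏ i, y (σ i) ^ (γ (σ i) + α i) := by
    intro σ γ
    rw [← Equiv.prod_comp σ (fun j => y j ^ γ j * c (γ j))]
    simp only [pow_add, prod_mul_distrib]
    ring
  calc alternant y α * ∑ γ ∈ piAntidiag univ d, ∏ j, y j ^ γ j * c (γ j)
      = ∑ σ : Perm (Fin n), ∑ γ ∈ piAntidiag univ d,
          (Perm.sign σ : R) * ((∏ j, c (γ (σ j))) * ∏ i, y (σ i) ^ (γ (σ i) + α i)) := by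
        rw [alternant_eq_sum, sum_mul]
        refine sum_congr rfl fun σ _ => ?_
        rw [mul_sum]
        exact sum_congr rfl fun γ _ => by rw [mul_assoc, hterm]
    _ = ∑ σ : Perm (Fin n), ∑ β ∈ piAntidiag univ d,
          (Perm.sign σ : R) * ((∏ j, c (β j)) * ∏ i, y (σ i) ^ (β i + α i)) :=
        sum_congr rfl fun σ _ => sum_piAntidiag_comp_perm σ d
          fun β => (Perm.sign σ : R) * ((∏ j, c (β j)) * ∏ i, y (σ i) ^ (β i + α i))
    _ = ∑ β ∈ piAntidiag univ d, (∏ j, c (β j)) * alternant y (β + α) := by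
        rw [sum_comm]
        refine sum_congr rfl fun β _ => ?_
        rw [alternant_eq_sum, mul_sum]
        exact sum_congr rfl fun σ _ => by simp only [Pi.add_apply]; ring

lemma sum_piAntidiag_shift (e : Fin n → ℕ) (c : ℤ → R) (hc : ∀ r < 0, c r = 0)
    (G : (Fin n → ℕ) → R) (d : ℕ) :
    ∑ β ∈ piAntidiag univ d, (∏ j, c (β j)) * G (β + e)
      = ∑ m ∈ piAntidiag univ (d + ∑ i, e i), (∏ j, c ((m j : ℤ) - e j)) * G m := by
  rw [← sum_filter_of_ne (s := piAntidiag univ (d + ∑ i, e i)) (p := fun m => ∀ i, e i ≤ m i)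
    fun m _ hm => ?_]
  · refine sum_nbij' (· + e) (fun m i => m i - e i) (fun β hβ => ?_) (fun m hm => ?_)
      (fun β _ => by ext; simp) (fun m hm => ?_) (fun β _ => by simp)
    · simp only [mem_filter, mem_piAntidiag, mem_univ, implies_true, and_true] at hβ ⊢
      simp [sum_add_distrib, hβ]
    · simp only [mem_filter, mem_piAntidiag, mem_univ, implies_true, and_true] at hm ⊢
      have : ∑ i, (m i - e i) + ∑ i, e i = ∑ i, m i := by
        rw [← sum_add_distrib]
        exact sum_congr rfl fun i _ => tsub_add_cancel_of_le (hm.2 i)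
      exact add_right_cancel (this.trans hm.1)
    · ext i
      simp [tsub_add_cancel_of_le ((mem_filter.mp hm).2 i)]
  · by_contra h
    obtain ⟨i, hi⟩ := not_forall.mp h
    exact hm (by rw [prod_eq_zero (mem_univ i) (hc ((m i : ℤ) - e i) (by omega)), zero_mul])

lemma sum_perm_mul_alternant_comp (y : Fin n → R) (c : ℤ → R) (u e : Fin n → ℕ) :
    ∑ τ : Perm (Fin n), (∏ j, c ((u (τ j) : ℤ) - e j)) * alternant y (u ∘ τ)
      = alternant y u * (Matrix.of fun i j => c ((u i : ℤ) - e j)).det := by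
  simp only [alternant_comp_perm, Matrix.det_apply, mul_sum, Units.smul_def, zsmul_eq_mul,
    Matrix.of_apply]
  exact sum_congr rfl fun τ _ => by ring

theorem alternant_dlt_mul_sum_piAntidiag_eq_sum_PLen (y : Fin n → R) (c : ℤ → R)
    (hc : ∀ r < 0, c r = 0) (d : ℕ) :
    alternant y (dlt n) * ∑ γ ∈ piAntidiag univ d, ∏ j, y j ^ γ j * c (γ j)
      = ∑ f ∈ PLen n d, alternant y (f + dlt n) * jacobiTrudi c f := by
  set N := d + ∑ i, dlt n i
  calc _ = ∑ β ∈ piAntidiag univ d, (∏ j, c (β j)) * alternant y (β + dlt n) :=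
        alternant_mul_sum_piAntidiag y (dlt n) (fun r => c r) d
    _ = ∑ m ∈ piAntidiag univ N, (∏ j, c ((m j : ℤ) - dlt n j)) * alternant y m :=
        sum_piAntidiag_shift _ c hc _ d
    _ = ∑ m ∈ (piAntidiag univ N).filter Function.Injective,
          (∏ j, c ((m j : ℤ) - dlt n j)) * alternant y m :=
        (sum_filter_of_ne fun m _ hm => by_contra fun h =>
          hm (by rw [alternant_eq_zero_of_not_injective y h, mul_zero])).symm
    _ = ∑ u ∈ (piAntidiag univ N).filter StrictAnti,
          alternant y u * (Matrix.of fun i j => c ((u i : ℤ) - dlt n j)).det := by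
        rw [sum_piAntidiag_injective]
        exact sum_congr rfl fun u _ => sum_perm_mul_alternant_comp y c u (dlt n)
    _ = ∑ f ∈ PLen n d, alternant y (f + dlt n) * jacobiTrudi c f := by
        rw [← sum_PLen_add_dlt]
        refine sum_congr rfl fun f _ => congrArg _ (congrArg _ (Matrix.ext fun i j => ?_))
        simp only [Matrix.of_apply, Pi.add_apply]
        congr 1
        have := dlt_sub_dlt i j
        push_cast
        omega

end Cauchy

lemma rename_aalt {σ : Type*} {n : ℕ} (g : Fin n → σ) (α : Fin n → ℕ) :
    MvPolynomial.rename g (aalt n α)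
      = alternant (fun j => (MvPolynomial.X (g j) : MvPolynomial σ ℚ)) α := by
  simp [aalt, alternant_eq_sum, map_sum, map_prod]

lemma rename_Sred {σ : Type*} {n : ℕ} (g : Fin n → σ) (q : ℤ → MvPolynomial (Fin n) ℚ)
    (f : Fin n → ℕ) :
    MvPolynomial.rename g (Sred n q f) = jacobiTrudi (fun r => MvPolynomial.rename g (q r)) f := by
  simp [Sred, jacobiTrudi, AlgHom.map_det, AlgHom.mapMatrix_apply, Matrix.map]

section PowerSeries

open PowerSeries

variable {A B : Type*} [CommRing A] [CommRing B]

lemma coeff_prod_mk {ι : Type*} [Fintype ι] [DecidableEq ι] (F : ι → ℕ → A) (d : ℕ) :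
    coeff d (∏ j, mk (F j)) = ∑ γ ∈ piAntidiag univ d, ∏ j, F j (γ j) := by
  rw [coeff_prod, finsuppAntidiag, sum_map, ← sum_attach (piAntidiag univ d)]
  simp [coeff_mk]

lemma mk_mul_prod_one_sub_map_rescale {ι : Type*} [Fintype ι] {a : ℕ → A} {x : ι → A}
    (h : mk a * ∏ i, (1 - C (x i) * X) = ∏ i, (1 + C (x i) * X)) (φ : A →+* B) (b : B) :
    mk (fun r => b ^ r * φ (a r)) * ∏ i, (1 - C (φ (x i) * b) * X)
      = ∏ i, (1 + C (φ (x i) * b) * X) := by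
  have hmk : map φ (mk a) = mk fun r => φ (a r) := by
    ext; simp
  have hC : ∀ z : B, rescale b (C z) = C z := fun z => by
    ext k; cases k <;> simp [coeff_rescale, coeff_C]
  have := congrArg (fun s => rescale b (map φ s)) h
  simpa [map_prod, hmk, rescale_mk, rescale_X, hC, mul_assoc] using this

end PowerSeries

/-- Stated as an identity of formal power series in an auxiliary variable `t` recording the
degree `|λ|` (equivalently, `x ↦ tx`), with the denominator cleared.  Here `S` is the family of
Schur polynomials in the `y`-variables, characterized by `a_δ · s_λ = a_{λ+δ}`, and `q` is
characterized by `(∑ q_r t^r) ∏ᵢ (1 - xᵢ t) = ∏ᵢ (1 + xᵢ t)`. -/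
theorem cauchy_two_reduced_general (n : ℕ)
    (q : ℤ → MvPolynomial (Fin n) ℚ)
    (hneg : ∀ r : ℤ, r < 0 → q r = 0)
    (hq : (PowerSeries.mk fun r : ℕ => q r) *
        ∏ i : Fin n, (1 - PowerSeries.C (R := MvPolynomial (Fin n) ℚ) (MvPolynomial.X i) *
          PowerSeries.X)
      = ∏ i : Fin n, (1 + PowerSeries.C (R := MvPolynomial (Fin n) ℚ) (MvPolynomial.X i) *
          PowerSeries.X))
    (S : (Fin n → ℕ) → MvPolynomial (Fin n) ℚ)
    (hS : ∀ f : Fin n → ℕ, aalt n (dlt n) * S f = aalt n fun i => f i + dlt n i) :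
    (PowerSeries.mk fun d =>
        ∑ f ∈ PLen n d,
          MvPolynomial.rename (Sum.inr : Fin n → Fin n ⊕ Fin n) (S f) *
            MvPolynomial.rename (Sum.inl : Fin n → Fin n ⊕ Fin n) (Sred n q f)) *
      ∏ p : Fin n × Fin n,
        (1 - PowerSeries.C (R := MvPolynomial (Fin n ⊕ Fin n) ℚ)
            (MvPolynomial.X (Sum.inl p.1) * MvPolynomial.X (Sum.inr p.2)) * PowerSeries.X)
    = ∏ p : Fin n × Fin n,
        (1 + PowerSeries.C (R := MvPolynomial (Fin n ⊕ Fin n) ℚ)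
            (MvPolynomial.X (Sum.inl p.1) * MvPolynomial.X (Sum.inr p.2)) * PowerSeries.X) := by
  open PowerSeries in
  set y : Fin n → MvPolynomial (Fin n ⊕ Fin n) ℚ := fun j => MvPolynomial.X (Sum.inr j)
  set c : ℤ → MvPolynomial (Fin n ⊕ Fin n) ℚ := fun r => MvPolynomial.rename Sum.inl (q r)
  have hc : ∀ r < 0, c r = 0 := fun r hr => by simp [c, hneg r hr]
  have hfactor (j : Fin n) :
      mk (fun r => y j ^ r * c r) * ∏ i, (1 - C (MvPolynomial.X (Sum.inl i) * y j) * X)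
        = ∏ i, (1 + C (MvPolynomial.X (Sum.inl i) * y j) * X) := by
    simpa using mk_mul_prod_one_sub_map_rescale hq (MvPolynomial.rename Sum.inl).toRingHom (y j)
  have hgen : (mk fun d => ∑ f ∈ PLen n d,
        MvPolynomial.rename Sum.inr (S f) * MvPolynomial.rename Sum.inl (Sred n q f))
      = ∏ j, mk fun r => y j ^ r * c r := by
    have ha : alternant y (dlt n) ≠ 0 :=
      alternant_dlt_ne_zero (MvPolynomial.X_injective.comp Sum.inr_injective)
    refine mul_left_cancel₀ ((map_ne_zero_iff _ C_injective).mpr ha) (ext fun d => ?_)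
    rw [coeff_C_mul, coeff_C_mul, coeff_mk, coeff_prod_mk,
      alternant_dlt_mul_sum_piAntidiag_eq_sum_PLen y c hc d, mul_sum]
    refine sum_congr rfl fun f _ => ?_
    have hschur := congrArg (MvPolynomial.rename (Sum.inr : Fin n → Fin n ⊕ Fin n)) (hS f)
    rw [map_mul, rename_aalt, rename_aalt] at hschur
    rw [← mul_assoc, rename_Sred, hschur]
    rfl
  rw [hgen, Fintype.prod_prod_type_right, Fintype.prod_prod_type_right, ← prod_mul_distrib]
  exact prod_congr rfl fun j _ => hfactor j

/-- The Cauchy-type identity `∑_{λ ∈ P⁽ⁿ⁾} s_λ(y) S_λ(x) = ∏_{i,j} (1+xᵢyⱼ)/(1-xᵢyⱼ)`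
for 2-reduced Schur polynomials, stated as an identity of formal power series in an
auxiliary variable `t` recording the degree `|λ|` (equivalently, `x ↦ tx`), with the
denominator cleared.  Here `S` is the family of Schur polynomials in the `y`-variables,
characterized by `a_δ · s_λ = a_{λ+δ}`, and `q` is characterized by
`(∑ q_r t^r) ∏ᵢ (1 - xᵢ t) = ∏ᵢ (1 + xᵢ t)`. -/
theorem cauchy_two_reduced (n : ℕ) (hn : 1 ≤ n)
    (q : ℤ → MvPolynomial (Fin n) ℚ)
    (hneg : ∀ r : ℤ, r < 0 → q r = 0)
    (hq : (PowerSeries.mk fun r : ℕ => q r) *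
        ∏ i : Fin n, (1 - PowerSeries.C (R := MvPolynomial (Fin n) ℚ) (MvPolynomial.X i) *
          PowerSeries.X)
      = ∏ i : Fin n, (1 + PowerSeries.C (R := MvPolynomial (Fin n) ℚ) (MvPolynomial.X i) *
          PowerSeries.X))
    (S : (Fin n → ℕ) → MvPolynomial (Fin n) ℚ)
    (hS : ∀ f : Fin n → ℕ, aalt n (dlt n) * S f = aalt n fun i => f i + dlt n i) :
    (PowerSeries.mk fun d =>
        ∑ f ∈ PLen n d,
          MvPolynomial.rename (Sum.inr : Fin n → Fin n ⊕ Fin n) (S f) *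
            MvPolynomial.rename (Sum.inl : Fin n → Fin n ⊕ Fin n) (Sred n q f)) *
      ∏ p : Fin n × Fin n,
        (1 - PowerSeries.C (R := MvPolynomial (Fin n ⊕ Fin n) ℚ)
            (MvPolynomial.X (Sum.inl p.1) * MvPolynomial.X (Sum.inr p.2)) * PowerSeries.X)
    = ∏ p : Fin n × Fin n,
        (1 + PowerSeries.C (R := MvPolynomial (Fin n ⊕ Fin n) ℚ)
            (MvPolynomial.X (Sum.inl p.1) * MvPolynomial.X (Sum.inr p.2)) * PowerSeries.X) :=
  cauchy_two_reduced_general n q hneg hq S hS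
end
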